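/- Define g₁, g₂ : ℝ → ℝ by g₁(x) := x^{3/2} for x > 0 and g₁(x) := 0 for x ≤ 0, and g₂(x) := −x^{3/2} for x > 0 and g₂(x) := 0 for x ≤ 0, so K := {x ∈ ℝ : g₁(x) ≤ 0, g₂(x) ≤ 0} = (−∞, 0], which is closed. Let C := [0, 1], K̃ := C ∩ K = {0}, and x̄ := 0. Then: g₁ and g₂ are tangentially convex at x̄ with g₁(x̄) = g₂(x̄) = 0 and ∂_T g₁(x̄) = ∂_T g₂(x̄) = {0}; K is nearly convex at x̄; D(x̄) = ℝ ⊄ {0} = T_{K̃}(x̄), so the non-smooth Abadie constraint qualification fails at x̄; and M(x̄) = {0} while (K̃ − x̄)° = ℝ and (K − x̄)° = [0, +∞). Hence the Abadie constraint qualification cannot be omitted from the dual cone characterization M(x̄) = (K − x̄)° = (K̃ − x̄)°. -/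

import Mathlib

open Filter Set Pointwise
open scoped Topology RealInnerProductSpace

noncomputable section

variable {E : Type*} [NormedAddCommGroup E] [InnerProductSpace ℝ E]

/-- Directional derivative of `f` at `x` in direction `v`, as the limit of difference
quotients as `α → 0⁺` (defined via `limUnder`; meaningful when the limit exists). -/
noncomputable def dirDeriv (f : E → ℝ) (x v : E) : ℝ :=
  limUnder (𝓝[>] (0:ℝ)) (fun α : ℝ => (f (x + α • v) - f x) / α)

/-- `f` is tangentially convex at `x`: the directional derivative exists (and is finite)
in every direction, and `v ↦ f'(x, v)` is convex. -/
def TangentiallyConvexAt (f : E → ℝ) (x : E) : Prop :=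
  (∀ v : E, Tendsto (fun α : ℝ => (f (x + α • v) - f x) / α) (𝓝[>] (0:ℝ))
      (𝓝 (dirDeriv f x v)))
  ∧ ConvexOn ℝ Set.univ (dirDeriv f x)

/-- The tangential subdifferential `∂_T f (x)`. -/
def tangSubdiff (f : E → ℝ) (x : E) : Set E :=
  {p : E | ∀ v : E, ⟪p, v⟫ ≤ dirDeriv f x v}

/-- The polar cone `(W - x)°`. -/
def polarOf (W : Set E) (x : E) : Set E :=
  {l : E | ∀ y ∈ W, ⟪l, y - x⟫ ≤ 0}

/-- The contingent (Bouligand tangent) cone of `U` at `x`. -/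
def contingentCone (U : Set E) (x : E) : Set E :=
  {v : E | ∃ (a : ℕ → ℝ) (w : ℕ → E), (∀ k, 0 < a k) ∧
    Tendsto a atTop (𝓝 0) ∧ Tendsto w atTop (𝓝 v) ∧ ∀ k, x + a k • w k ∈ U}

/-- `V` is nearly convex at `x ∈ V`. -/
def NearlyConvexAt (V : Set E) (x : E) : Prop :=
  ∀ y ∈ V, ∃ t : ℕ → ℝ, (∀ k, 0 < t k) ∧ Tendsto t atTop (𝓝 0) ∧
    ∀ᶠ k in atTop, x + t k • (y - x) ∈ V

/-- The non-smooth linearized tangential cone `D(x)`. -/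
def linTangCone {m : ℕ} (g : Fin m → E → ℝ) (x : E) : Set E :=
  {v : E | ∀ j : Fin m, g j x = 0 → ∀ η ∈ tangSubdiff (g j) x, ⟪v, η⟫ ≤ 0}

/-- The set `M(x)` of nonnegative combinations of tangential subgradients of active
constraints. -/
def Mset {m : ℕ} (g : Fin m → E → ℝ) (x : E) : Set E :=
  {u : E | ∃ (lam : Fin m → ℝ) (η : Fin m → E),
    (∀ j, 0 ≤ lam j) ∧ (∀ j, lam j * g j x = 0) ∧
    (∀ j, η j ∈ tangSubdiff (g j) x) ∧ u = ∑ j, lam j • η j}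

/-- `w = P_W(x)`: `w` is a best approximation of `x` from `W`. -/
def IsBestApprox (W : Set E) (x w : E) : Prop :=
  w ∈ W ∧ ∀ u ∈ W, ‖x - w‖ ≤ ‖x - u‖

/-- The convex subdifferential of `h` at `x₀`. -/
def convexSubdiff (h : E → ℝ) (x₀ : E) : Set E :=
  {p : E | ∀ y : E, ⟪p, y - x₀⟫ ≤ h y - h x₀}


/-- The constraint functions of Example 3.3: `g₁(x) = x^{3/2}` for `x > 0` and `0` otherwise,
`g₂(x) = -x^{3/2}` for `x > 0` and `0` otherwise. -/
def exg17 : Fin 2 → ℝ → ℝ :=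
  ![fun x => if 0 < x then x ^ ((3 : ℝ) / 2) else 0,
    fun x => if 0 < x then -(x ^ ((3 : ℝ) / 2)) else 0]

/-- The constraint set of Example 3.3. -/
def exK17 : Set ℝ := {x | ∀ j : Fin 2, exg17 j x ≤ 0}

/-- The set `C` of Example 3.3. -/
def exC17 : Set ℝ := Set.Icc 0 1

/-! Both constraints satisfy `|g_j x| ≤ |x|^{3/2}`, so they are Fréchet differentiable at `0`
with derivative `0`. All first-order data of the constraints is therefore trivial
(`∂_T g_j(0) = {0}`, `D(0) = ℝ`, `M(0) = {0}`), whereas the feasible set `C ∩ K = {0}` has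
contingent cone `{0}`. -/

section Differentiable

variable {F G : Type*} [NormedAddCommGroup F] [NormedSpace ℝ F]
  [NormedAddCommGroup G] [NormedSpace ℝ G]

theorem hasFDerivAt_zero_of_norm_le_rpow {f : F → G} {p : ℝ} (hp : 1 < p)
    (hf : ∀ y, ‖f y‖ ≤ ‖y‖ ^ p) : HasFDerivAt f (0 : F →L[ℝ] G) 0 := by
  have hf0 : f 0 = 0 := by
    simpa [Real.zero_rpow (by linarith : p ≠ 0)] using hf 0
  rw [hasFDerivAt_iff_isLittleO_nhds_zero]
  simp only [zero_add, hf0, sub_zero, zero_apply]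
  refine Asymptotics.IsLittleO.of_bound fun c hc => ?_
  have hsmall : Tendsto (fun y : F => ‖y‖ ^ (p - 1)) (𝓝 0) (𝓝 0) := by
    have := ((Real.continuousAt_rpow_const 0 (p - 1) (Or.inr (by linarith))).tendsto).comp
      (tendsto_norm_zero (E := F))
    simpa [Function.comp_def, Real.zero_rpow (by linarith : p - 1 ≠ 0)] using this
  filter_upwards [hsmall.eventually (ge_mem_nhds hc)] with y hy
  calc ‖f y‖ ≤ ‖y‖ ^ p := hf y
    _ = ‖y‖ ^ (p - 1) * ‖y‖ := by
      rw [← Real.rpow_add_one' (norm_nonneg y) (by linarith)]; ring_nf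
    _ ≤ c * ‖y‖ := by gcongr

end Differentiable

section Tangential

variable {f : E → ℝ} {f' : E →L[ℝ] ℝ} {x : E}

theorem HasFDerivAt.tendsto_dirQuotient (hf : HasFDerivAt f f' x) (v : E) :
    Tendsto (fun α : ℝ => (f (x + α • v) - f x) / α) (𝓝[>] 0) (𝓝 (f' v)) := by
  have hline : HasDerivAt (fun α : ℝ => f (x + α • v)) (f' v) 0 := by
    have hlin : HasDerivAt (fun α : ℝ => x + α • v) v 0 := by
      simpa using ((hasDerivAt_id (0 : ℝ)).smul_const v).const_add x
    exact hf.comp_hasDerivAt_of_eq 0 hlin (by simp)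
  simpa [div_eq_inv_mul] using hline.tendsto_slope_zero_right

theorem HasFDerivAt.dirDeriv_eq (hf : HasFDerivAt f f' x) (v : E) : dirDeriv f x v = f' v :=
  (hf.tendsto_dirQuotient v).limUnder_eq

theorem HasFDerivAt.tangentiallyConvexAt (hf : HasFDerivAt f f' x) : TangentiallyConvexAt f x := by
  have hdd : dirDeriv f x = f' := funext hf.dirDeriv_eq
  refine ⟨fun v => hdd ▸ hf.tendsto_dirQuotient v, ?_⟩
  rw [hdd]
  exact (f' : E →ₗ[ℝ] ℝ).convexOn convex_univ

theorem HasFDerivAt.tangSubdiff_eq_zero (hf : HasFDerivAt f (0 : E →L[ℝ] ℝ) x) :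
    tangSubdiff f x = {0} := by
  ext p
  simp only [tangSubdiff, mem_ofPred_eq, mem_singleton_iff, hf.dirDeriv_eq,
    zero_apply]
  refine ⟨fun hp => ?_, fun hp v => by simp [hp]⟩
  simpa using hp p

end Tangential

section Constraints

variable {m : ℕ} {g : Fin m → E → ℝ} {x : E}

theorem linTangCone_eq_univ_of_tangSubdiff_eq_zero (hg : ∀ j, tangSubdiff (g j) x = {0}) :
    linTangCone g x = univ :=
  eq_univ_of_forall fun v j _ η hη => by
    rw [hg j, mem_singleton_iff] at hη
    simp [hη]

theorem Mset_eq_zero_of_tangSubdiff_eq_zero (hg : ∀ j, tangSubdiff (g j) x = {0}) :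
    Mset g x = {0} := by
  ext u
  simp only [Mset, mem_ofPred_eq, mem_singleton_iff, hg]
  constructor
  · rintro ⟨lam, η, -, -, hη, rfl⟩
    simp [show η = 0 from funext hη]
  · rintro rfl
    exact ⟨0, 0, fun _ => le_rfl, by simp, fun _ => rfl, by simp⟩

end Constraints

theorem contingentCone_singleton (x : E) : contingentCone {x} x = {0} := by
  ext v
  simp only [contingentCone, mem_ofPred_eq, mem_singleton_iff, add_eq_left, smul_eq_zero]
  constructor
  · rintro ⟨a, w, ha, -, hw, hmem⟩
    have hw0 : w = 0 := funext fun k => (hmem k).resolve_left (ha k).ne'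
    exact tendsto_nhds_unique hw (hw0 ▸ tendsto_const_nhds)
  · rintro rfl
    exact ⟨fun k => 1 / (k + 1), 0, fun k => by positivity,
      tendsto_one_div_add_atTop_nhds_zero_nat, tendsto_const_nhds, fun _ => Or.inr rfl⟩

theorem polarOf_singleton (x : E) : polarOf {x} x = univ :=
  eq_univ_of_forall fun l y hy => by simp [mem_singleton_iff.mp hy]

theorem polarOf_Iic_zero : polarOf (Iic (0 : ℝ)) 0 = Ici 0 := by
  ext l
  simp only [polarOf, mem_ofPred_eq, mem_Iic, mem_Ici, sub_zero, RCLike.inner_apply,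
    conj_trivial]
  refine ⟨fun h => by nlinarith [h (-1) (by norm_num)], fun hl y hy => ?_⟩
  nlinarith

theorem StarConvex.nearlyConvexAt {V : Set E} {x : E} (hV : StarConvex ℝ x V) :
    NearlyConvexAt V x := fun y hy =>
  ⟨fun k => 1 / (k + 1), fun k => by positivity, tendsto_one_div_add_atTop_nhds_zero_nat,
    Eventually.of_forall fun k => hV.add_smul_sub_mem hy (by positivity)
      (div_le_one_of_le₀ (by simp) (by positivity))⟩

theorem abs_exg17_le (j : Fin 2) (y : ℝ) : |exg17 j y| ≤ |y| ^ ((3 : ℝ) / 2) := by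
  by_cases hy : 0 < y
  · fin_cases j <;> simp [exg17, hy, abs_of_pos hy, abs_of_pos (Real.rpow_pos_of_pos hy _)]
  · fin_cases j <;> simp [exg17, hy, Real.rpow_nonneg]

theorem hasFDerivAt_exg17 (j : Fin 2) : HasFDerivAt (exg17 j) (0 : ℝ →L[ℝ] ℝ) 0 :=
  hasFDerivAt_zero_of_norm_le_rpow (by norm_num) (abs_exg17_le j)

theorem exK17_eq_Iic : exK17 = Iic 0 := by
  ext y
  by_cases hy : 0 < y
  · simp [exK17, Fin.forall_fin_two, exg17, hy, hy.not_ge, Real.rpow_pos_of_pos hy]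
  · simp [exK17, Fin.forall_fin_two, exg17, hy, not_lt.mp hy]

theorem exC17_inter_exK17 : exC17 ∩ exK17 = {0} := by
  ext y
  simp only [exK17_eq_Iic, exC17, mem_inter_iff, mem_Icc, mem_Iic, mem_singleton_iff]
  constructor
  · rintro ⟨⟨h0, -⟩, h1⟩
    exact le_antisymm h1 h0
  · rintro rfl
    norm_num

/-- Example 3.3: with `K = (-∞, 0]`, `C = [0,1]`, `K̃ = {0}` and `x̄ = 0`,
the constraints are tangentially convex at `x̄` with `g₁(x̄) = g₂(x̄) = 0` and
`∂_T g₁(x̄) = ∂_T g₂(x̄) = {0}`; `K` is nearly convex at `x̄`; NACQ fails at `x̄`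
(`D(x̄) = ℝ ⊄ {0} = T_{K̃}(x̄)`); and `M(x̄) = {0}` while `(K̃ - x̄)° = ℝ` and
`(K - x̄)° = [0, ∞)`: NACQ cannot be omitted from Theorem 3.1. -/
theorem example_NACQ_needed :
    exK17 = Set.Iic 0 ∧ IsClosed exK17 ∧
    exC17 ∩ exK17 = {0} ∧
    (∀ j : Fin 2, TangentiallyConvexAt (exg17 j) 0) ∧
    (∀ j : Fin 2, exg17 j 0 = 0) ∧
    tangSubdiff (exg17 0) 0 = {0} ∧
    tangSubdiff (exg17 1) 0 = {0} ∧
    NearlyConvexAt exK17 0 ∧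
    linTangCone exg17 0 = Set.univ ∧
    contingentCone (exC17 ∩ exK17) 0 = {0} ∧
    ¬ linTangCone exg17 0 ⊆ contingentCone (exC17 ∩ exK17) 0 ∧
    Mset exg17 0 = {0} ∧
    polarOf (exC17 ∩ exK17) 0 = Set.univ ∧
    polarOf exK17 0 = Set.Ici 0 := by
  have hsub (j : Fin 2) : tangSubdiff (exg17 j) 0 = {0} :=
    (hasFDerivAt_exg17 j).tangSubdiff_eq_zero
  have hD : linTangCone exg17 0 = univ := linTangCone_eq_univ_of_tangSubdiff_eq_zero hsub
  have hT : contingentCone (exC17 ∩ exK17) 0 = {0} := by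
    rw [exC17_inter_exK17, contingentCone_singleton]
  refine ⟨exK17_eq_Iic, exK17_eq_Iic ▸ isClosed_Iic, exC17_inter_exK17,
    fun j => (hasFDerivAt_exg17 j).tangentiallyConvexAt, fun j => ?_, hsub 0, hsub 1, ?_, hD, hT,
    ?_, Mset_eq_zero_of_tangSubdiff_eq_zero hsub, ?_, exK17_eq_Iic ▸ polarOf_Iic_zero⟩
  · simpa using abs_exg17_le j 0
  · rw [exK17_eq_Iic]
    exact (convex_Iic 0).starConvex self_mem_Iic |>.nearlyConvexAt
  · rw [hD, hT]
    exact fun h => one_ne_zero (h (mem_univ 1))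
  · rw [exC17_inter_exK17, polarOf_singleton]
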